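/- arXiv:2108.05197 — 4 statements merged into one kernel-verified Lean document; each statement's English description precedes it below -/
import Mathlib

section
/- Let λ ∈ ℂ be nonzero and B, ω ∈ V, and set φ = λ·e^{B+iω} ∈ W_ℂ. Then ⟨φ, φ⟩ = 0 and ⟨φ, φ̄⟩ = 2·|λ|²·b(ω,ω). In particular, φ satisfies the generalized Calabi–Yau conditions ⟨φ,φ⟩ = 0 and ⟨φ,φ̄⟩ > 0 if and only if b(ω,ω) > 0. -/
noncomputable section

/-- ℂ-bilinear extension of `b` to `V_ℂ = V × V` (a pair `(x, y)` represents `x + i y`). -/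
def bC {V : Type*} [AddCommGroup V] [Module ℝ V]
    (b : V →ₗ[ℝ] V →ₗ[ℝ] ℝ) (φ ψ : V × V) : ℂ :=
  ⟨b φ.1 ψ.1 - b φ.2 ψ.2, b φ.1 ψ.2 + b φ.2 ψ.1⟩

/-- Complex conjugation on `V_ℂ = V × V`. -/
def conjV {V : Type*} [AddCommGroup V] [Module ℝ V] (φ : V × V) : V × V :=
  (φ.1, -φ.2)

/-- The ℂ-bilinear Mukai pairing on `W_ℂ = ℂ × V_ℂ × ℂ`. -/
def mukaiC {V : Type*} [AddCommGroup V] [Module ℝ V]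
    (b : V →ₗ[ℝ] V →ₗ[ℝ] ℝ) (w w' : ℂ × (V × V) × ℂ) : ℂ :=
  bC b w.2.1 w'.2.1 - w.1 * w'.2.2 - w.2.2 * w'.1

/-- Complex conjugation on `W_ℂ = ℂ × V_ℂ × ℂ`. -/
def conjW {V : Type*} [AddCommGroup V] [Module ℝ V]
    (w : ℂ × (V × V) × ℂ) : ℂ × (V × V) × ℂ :=
  ((starRingEnd ℂ) w.1, conjV w.2.1, (starRingEnd ℂ) w.2.2)

/-- Scalar multiplication by `λ ∈ ℂ` on `V_ℂ = V × V`. -/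
def csmul {V : Type*} [AddCommGroup V] [Module ℝ V] (lam : ℂ) (x : V × V) : V × V :=
  (lam.re • x.1 - lam.im • x.2, lam.re • x.2 + lam.im • x.1)

/-- Scalar multiplication by `λ ∈ ℂ` on `W_ℂ = ℂ × V_ℂ × ℂ`. -/
def smulW {V : Type*} [AddCommGroup V] [Module ℝ V]
    (lam : ℂ) (w : ℂ × (V × V) × ℂ) : ℂ × (V × V) × ℂ :=
  (lam * w.1, csmul lam w.2.1, lam * w.2.2)

/-- `e^{B+iω} = (1, B+iω, ½(b(B,B)−b(ω,ω)) + i·b(B,ω)) ∈ W_ℂ` for `B, ω ∈ V`. -/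
def expB {V : Type*} [AddCommGroup V] [Module ℝ V]
    (b : V →ₗ[ℝ] V →ₗ[ℝ] ℝ) (B ω : V) : ℂ × (V × V) × ℂ :=
  (1, (B, ω), ⟨(b B B - b ω ω) / 2, b B ω⟩)

/-!
The Mukai pairing is ℂ-bilinear and conjugation is ℂ-antilinear, so for `e = e^{B+iω}` we get
`⟨λe, λe⟩ = λ²⟨e, e⟩` and `⟨λe, conj (λe)⟩ = |λ|²⟨e, ē⟩`. With `b` symmetric, a direct
computation gives `⟨e, e⟩ = 0` and `⟨e, ē⟩ = 2 b(ω, ω)`.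
-/

section MukaiPairing

variable {V : Type*} [AddCommGroup V] [Module ℝ V] (b : V →ₗ[ℝ] V →ₗ[ℝ] ℝ)

theorem bC_csmul_left (lam : ℂ) (x y : V × V) :
    bC b (csmul lam x) y = lam * bC b x y := by
  apply Complex.ext <;>
  · simp only [bC, csmul, map_sub, map_add, map_smul, LinearMap.sub_apply,
      LinearMap.add_apply, LinearMap.smul_apply, smul_eq_mul, Complex.mul_re, Complex.mul_im]
    ring

theorem bC_csmul_right (lam : ℂ) (x y : V × V) :
    bC b x (csmul lam y) = lam * bC b x y := by
  apply Complex.ext <;>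
  · simp only [bC, csmul, map_sub, map_add, map_smul, smul_eq_mul,
      Complex.mul_re, Complex.mul_im]
    ring

theorem mukaiC_smulW_left (lam : ℂ) (w w' : ℂ × (V × V) × ℂ) :
    mukaiC b (smulW lam w) w' = lam * mukaiC b w w' := by
  simp only [mukaiC, smulW, bC_csmul_left]
  ring

theorem mukaiC_smulW_right (lam : ℂ) (w w' : ℂ × (V × V) × ℂ) :
    mukaiC b w (smulW lam w') = lam * mukaiC b w w' := by
  simp only [mukaiC, smulW, bC_csmul_right]
  ring

theorem conjW_smulW (lam : ℂ) (w : ℂ × (V × V) × ℂ) :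
    conjW (smulW lam w) = smulW (starRingEnd ℂ lam) (conjW w) := by
  simp only [conjW, smulW, conjV, csmul, map_mul, Complex.conj_re, Complex.conj_im,
    Prod.mk.injEq, true_and, and_true]
  exact ⟨by module, by module⟩

theorem mukaiC_expB_self {B ω : V} (hBω : b ω B = b B ω) :
    mukaiC b (expB b B ω) (expB b B ω) = 0 := by
  apply Complex.ext <;>
  · simp only [mukaiC, expB, bC, hBω, Complex.sub_re, Complex.sub_im, Complex.mul_re,
      Complex.mul_im, Complex.one_re, Complex.one_im, Complex.zero_re, Complex.zero_im]
    ring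

theorem mukaiC_expB_conjW {B ω : V} (hBω : b ω B = b B ω) :
    mukaiC b (expB b B ω) (conjW (expB b B ω)) = 2 * b ω ω := by
  apply Complex.ext <;>
  · simp only [mukaiC, expB, conjW, conjV, bC, hBω, map_neg, map_one, Complex.sub_re,
      Complex.sub_im, Complex.mul_re, Complex.mul_im, Complex.one_re, Complex.one_im,
      Complex.conj_re, Complex.conj_im, Complex.ofReal_re, Complex.ofReal_im,
      Complex.re_ofNat, Complex.im_ofNat]
    ring

end MukaiPairing

theorem typeA_generalized_CY
    {V : Type*} [AddCommGroup V] [Module ℝ V]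
    (b : V →ₗ[ℝ] V →ₗ[ℝ] ℝ) (hsymm : ∀ x y : V, b x y = b y x)
    (lam : ℂ) (hlam : lam ≠ 0) (B ω : V) :
    mukaiC b (smulW lam (expB b B ω)) (smulW lam (expB b B ω)) = 0 ∧
    mukaiC b (smulW lam (expB b B ω)) (conjW (smulW lam (expB b B ω)))
      = ((2 * ‖lam‖ ^ 2 * b ω ω : ℝ) : ℂ) ∧
    ((mukaiC b (smulW lam (expB b B ω)) (smulW lam (expB b B ω)) = 0 ∧
      0 < (mukaiC b (smulW lam (expB b B ω)) (conjW (smulW lam (expB b B ω)))).re)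
      ↔ 0 < b ω ω) := by
  have isotropic : mukaiC b (smulW lam (expB b B ω)) (smulW lam (expB b B ω)) = 0 := by
    rw [mukaiC_smulW_left, mukaiC_smulW_right, mukaiC_expB_self b (hsymm ω B), mul_zero,
      mul_zero]
  have hermitian : mukaiC b (smulW lam (expB b B ω)) (conjW (smulW lam (expB b B ω)))
      = ((2 * ‖lam‖ ^ 2 * b ω ω : ℝ) : ℂ) := by
    rw [conjW_smulW, mukaiC_smulW_left, mukaiC_smulW_right, mukaiC_expB_conjW b (hsymm ω B),
      ← mul_assoc, Complex.mul_conj']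
    push_cast
    ring
  have hnorm : 0 < 2 * ‖lam‖ ^ 2 := by positivity
  refine ⟨isotropic, hermitian, ?_⟩
  rw [hermitian, Complex.ofReal_re, mul_pos_iff_of_pos_left hnorm]
  exact and_iff_right isotropic
end
end

section
/- Let σ ∈ V_ℂ satisfy b(σ,σ) = 0 and b(σ,σ̄) > 0, let λ ∈ ℂ be nonzero, and let B, ω ∈ V with b(ω,ω) > 0. Set φ = (0, σ, 0) ∈ W_ℂ and φ' = λ·e^{B+iω} ∈ W_ℂ. Then the planes P_φ and P_{φ'} are pointwise orthogonal with respect to the Mukai pairing if and only if b(σ, B) = 0 and b(σ, ω) = 0. -/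
noncomputable section

/-- The Mukai pairing on `W = ℝ × V × ℝ`. -/
def mukai {V : Type*} [AddCommGroup V] [Module ℝ V]
    (b : V →ₗ[ℝ] V →ₗ[ℝ] ℝ) (w w' : ℝ × V × ℝ) : ℝ :=
  b w.2.1 w'.2.1 - w.1 * w'.2.2 - w.2.2 * w'.1

/-- The real part of `ψ ∈ W_ℂ`, an element of `W = ℝ × V × ℝ`. -/
def ReW {V : Type*} [AddCommGroup V] [Module ℝ V]
    (w : ℂ × (V × V) × ℂ) : ℝ × V × ℝ :=
  (w.1.re, w.2.1.1, w.2.2.re)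

/-- The imaginary part of `ψ ∈ W_ℂ`, an element of `W = ℝ × V × ℝ`. -/
def ImW {V : Type*} [AddCommGroup V] [Module ℝ V]
    (w : ℂ × (V × V) × ℂ) : ℝ × V × ℝ :=
  (w.1.im, w.2.1.2, w.2.2.im)

/-- The real plane `P_ψ = ℝ·Re ψ + ℝ·Im ψ ⊆ W` of `ψ ∈ W_ℂ`. -/
def PW {V : Type*} [AddCommGroup V] [Module ℝ V]
    (w : ℂ × (V × V) × ℂ) : Submodule ℝ (ℝ × V × ℝ) :=
  Submodule.span ℝ {ReW w, ImW w}

/-- `P_ψ` and `P_{ψ'}` are pointwise orthogonal for the Mukai pairing. -/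
def PointwiseOrth {V : Type*} [AddCommGroup V] [Module ℝ V]
    (b : V →ₗ[ℝ] V →ₗ[ℝ] ℝ) (w w' : ℂ × (V × V) × ℂ) : Prop :=
  ∀ u ∈ PW w, ∀ v ∈ PW w', mukai b u v = 0

/-!
Let `σ ∈ V_ℂ` with `b(σ,σ) = 0`, `b(σ,σ̄) > 0`, `λ ∈ ℂ` nonzero, `B, ω ∈ V` with
`b(ω,ω) > 0`. Set `φ = (0,σ,0)` and `φ' = λ·e^{B+iω}`. Then `P_φ` and `P_{φ'}` are
pointwise orthogonal for the Mukai pairing iff `b(σ,B) = 0` and `b(σ,ω) = 0`.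
-/

theorem orthogonality_of_typeB_and_typeA
    {V : Type*} [AddCommGroup V] [Module ℝ V]
    (b : V →ₗ[ℝ] V →ₗ[ℝ] ℝ) (hsymm : ∀ x y : V, b x y = b y x)
    (σ : V × V) (hσ0 : bC b σ σ = 0) (hσpos : 0 < (bC b σ (conjV σ)).re)
    (lam : ℂ) (hlam : lam ≠ 0) (B ω : V) (hω : 0 < b ω ω) :
    PointwiseOrth b ((0 : ℂ), σ, (0 : ℂ)) (smulW lam (expB b B ω)) ↔
      (bC b σ (B, (0 : V)) = 0 ∧ bC b σ (ω, (0 : V)) = 0) := by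
  constructor
  · intro h
    have m1 : ReW ((0:ℂ), σ, (0:ℂ)) ∈ PW ((0:ℂ), σ, (0:ℂ)) :=
      Submodule.subset_span (by simp)
    have m2 : ImW ((0:ℂ), σ, (0:ℂ)) ∈ PW ((0:ℂ), σ, (0:ℂ)) :=
      Submodule.subset_span (by simp)
    have m1' : ReW (smulW lam (expB b B ω)) ∈ PW (smulW lam (expB b B ω)) :=
      Submodule.subset_span (by simp)
    have m2' : ImW (smulW lam (expB b B ω)) ∈ PW (smulW lam (expB b B ω)) :=
      Submodule.subset_span (by simp)
    have e11 := h _ m1 _ m1'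
    have e12 := h _ m1 _ m2'
    have e21 := h _ m2 _ m1'
    have e22 := h _ m2 _ m2'
    simp [mukai, ReW, ImW, smulW, expB, csmul, map_sub, map_add, map_smul,
      smul_eq_mul] at e11 e12 e21 e22
    have hn2 : Complex.normSq lam ≠ 0 := (Complex.normSq_pos.mpr hlam).ne'
    have hne : lam.re * lam.re + lam.im * lam.im ≠ 0 := by
      simpa [Complex.normSq_apply] using hn2
    have hB1 : b σ.1 B = 0 := by
      have h0 : (lam.re * lam.re + lam.im * lam.im) * b σ.1 B = 0 := by
        linear_combination lam.re * e11 + lam.im * e12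
      exact (mul_eq_zero.mp h0).resolve_left hne
    have hω1 : b σ.1 ω = 0 := by
      have h0 : (lam.re * lam.re + lam.im * lam.im) * b σ.1 ω = 0 := by
        linear_combination lam.re * e12 - lam.im * e11
      exact (mul_eq_zero.mp h0).resolve_left hne
    have hB2 : b σ.2 B = 0 := by
      have h0 : (lam.re * lam.re + lam.im * lam.im) * b σ.2 B = 0 := by
        linear_combination lam.re * e21 + lam.im * e22
      exact (mul_eq_zero.mp h0).resolve_left hne
    have hω2 : b σ.2 ω = 0 := by
      have h0 : (lam.re * lam.re + lam.im * lam.im) * b σ.2 ω = 0 := by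
        linear_combination lam.re * e22 - lam.im * e21
      exact (mul_eq_zero.mp h0).resolve_left hne
    constructor <;> simp [Complex.ext_iff, bC, hB1, hB2, hω1, hω2]
  · rintro ⟨h1, h2⟩
    rw [Complex.ext_iff] at h1 h2
    simp [bC] at h1 h2
    intro u hu v hv
    rw [PW, Submodule.mem_span_pair] at hu hv
    obtain ⟨s, t, rfl⟩ := hu
    obtain ⟨s', t', rfl⟩ := hv
    simp [mukai, ReW, ImW, smulW, expB, csmul, Prod.smul_def, smul_eq_mul,
      map_add, map_smul, map_sub]
    simp [h1.1, h1.2, h2.1, h2.2]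
end
end

section
/- (Necessity in the characterization of Kähler rigidity.) Let B, ω ∈ Λ_ℝ with b(ω,ω) > 0, and set Re φ = (1, B, ½(b(B,B) − b(ω,ω))) and Im φ = (0, ω, b(B,ω)) in M_ℝ. If there exists a ℤ-submodule L ⊆ M of rank 2 whose ℝ-span contains both Re φ and Im φ, then B lies in the image of Λ_ℚ in Λ_ℝ, there exist κ ∈ ℝ and H ∈ Λ with ω = κ·H, and b(ω,ω) ∈ ℚ. -/
noncomputable section

open Matrix in
/-- The ℝ-bilinear extension to `Λ_ℝ = ℝⁿ` of the integral symmetric bilinear form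
on `Λ = ℤⁿ` with Gram matrix `G`. -/
def bR {n : ℕ} (G : Matrix (Fin n) (Fin n) ℤ) (x y : Fin n → ℝ) : ℝ :=
  x ⬝ᵥ (G.map (Int.cast : ℤ → ℝ)).mulVec y

/-- The canonical map `Λ = ℤⁿ → Λ_ℝ = ℝⁿ`. -/
def intCast {n : ℕ} (v : Fin n → ℤ) : Fin n → ℝ := fun i => (v i : ℝ)

/-- The Mukai lattice `M = ℤ × Λ × ℤ` viewed inside `M_ℝ = ℝ × Λ_ℝ × ℝ`. -/
def Mset (n : ℕ) : Set (ℝ × (Fin n → ℝ) × ℝ) :=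
  {w | ∃ (a c : ℤ) (x : Fin n → ℤ), w = ((a : ℝ), intCast x, (c : ℝ))}

open Matrix in
lemma bR_int {n : ℕ} (G : Matrix (Fin n) (Fin n) ℤ) (x y : Fin n → ℤ) :
    bR G (intCast x) (intCast y) = ((x ⬝ᵥ G.mulVec y : ℤ) : ℝ) := by
  simp [bR, intCast, Matrix.mulVec, dotProduct, Finset.mul_sum]

open Matrix in
lemma bR_rat {n : ℕ} (G : Matrix (Fin n) (Fin n) ℤ) (x y : Fin n → ℚ) :
    bR G (fun i => ((x i : ℝ))) (fun i => ((y i : ℝ)))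
      = ((x ⬝ᵥ (G.map (Int.cast : ℤ → ℚ)).mulVec y : ℚ) : ℝ) := by
  simp [bR, Matrix.mulVec, dotProduct, Finset.mul_sum]

lemma bR_add_left {n : ℕ} (G : Matrix (Fin n) (Fin n) ℤ) (x y z : Fin n → ℝ) :
    bR G (x + y) z = bR G x z + bR G y z := by
  simp [bR, add_dotProduct]

lemma bR_smul_left {n : ℕ} (G : Matrix (Fin n) (Fin n) ℤ) (r : ℝ) (x z : Fin n → ℝ) :
    bR G (r • x) z = r * bR G x z := by
  simp [bR, smul_dotProduct, smul_eq_mul]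

lemma bR_smul_right {n : ℕ} (G : Matrix (Fin n) (Fin n) ℤ) (r : ℝ) (x z : Fin n → ℝ) :
    bR G x (r • z) = r * bR G x z := by
  simp [bR, Matrix.mulVec_smul, dotProduct_smul, smul_eq_mul]

theorem kahler_rigid_necessity
    {n : ℕ} (G : Matrix (Fin n) (Fin n) ℤ) (hG : G.IsSymm)
    (B ω : Fin n → ℝ) (hω : 0 < bR G ω ω)
    (L : Submodule ℤ (ℝ × (Fin n → ℝ) × ℝ))
    (hLM : (L : Set (ℝ × (Fin n → ℝ) × ℝ)) ⊆ Mset n)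
    (hrk : Module.finrank ℤ L = 2)
    (hRe : ((1 : ℝ), B, (bR G B B - bR G ω ω) / 2)
      ∈ Submodule.span ℝ (L : Set (ℝ × (Fin n → ℝ) × ℝ)))
    (hIm : ((0 : ℝ), ω, bR G B ω)
      ∈ Submodule.span ℝ (L : Set (ℝ × (Fin n → ℝ) × ℝ))) :
    (∃ q : Fin n → ℚ, B = fun i => (q i : ℝ)) ∧
    (∃ (κ : ℝ) (H : Fin n → ℤ), ω = κ • intCast H) ∧
    (∃ q : ℚ, bR G ω ω = (q : ℝ)) := by
  classical
  set Rphi : ℝ × (Fin n → ℝ) × ℝ := ((1 : ℝ), B, (bR G B B - bR G ω ω) / 2) with hRphi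
  set Iphi : ℝ × (Fin n → ℝ) × ℝ := ((0 : ℝ), ω, bR G B ω) with hIphi
  have hωne : ω ≠ 0 := by
    intro h
    rw [h] at hω
    simp [bR] at hω
  have hIne : Iphi ≠ 0 := by
    intro h
    apply hωne
    have := congrArg (fun v : ℝ × (Fin n → ℝ) × ℝ => v.2.1) h
    simpa [hIphi] using this
  -- extraction of component equations
  have hcomp : ∀ (s t : ℝ) (v : ℝ × (Fin n → ℝ) × ℝ), s • Rphi + t • Iphi = v →
      s = v.1 ∧ s • B + t • ω = v.2.1 ∧
        s * ((bR G B B - bR G ω ω) / 2) + t * bR G B ω = v.2.2 := by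
    intro s t v h
    subst h
    refine ⟨?_, ?_, ?_⟩ <;>
      simp [hRphi, hIphi, Prod.smul_mk, Prod.mk_add_mk, smul_eq_mul]
  -- linear independence of Rphi, Iphi
  have hind : LinearIndependent ℝ ![Rphi, Iphi] := by
    rw [LinearIndependent.pair_iff]
    intro s t h
    have h1 : s = 0 := by simpa using (hcomp s t 0 h).1
    subst h1
    rw [zero_smul, zero_add] at h
    rcases smul_eq_zero.mp h with h' | h'
    · exact ⟨rfl, h'⟩
    · exact absurd h' hIne
  -- the plane spanned by Rphi, Iphi
  set P : Submodule ℝ (ℝ × (Fin n → ℝ) × ℝ) := Submodule.span ℝ {Rphi, Iphi} with hP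
  set W : Submodule ℝ (ℝ × (Fin n → ℝ) × ℝ) := Submodule.span ℝ (L : Set (ℝ × (Fin n → ℝ) × ℝ)) with hW
  have hPW : P ≤ W := by
    rw [hP, Submodule.span_le]
    intro v hv
    rcases hv with h | h
    · rw [h]; exact hRe
    · rw [Set.mem_singleton_iff.mp h]; exact hIm
  have hfP : Module.finrank ℝ P = 2 := by
    have hr : Set.range ![Rphi, Iphi] = {Rphi, Iphi} := by
      simp only [Matrix.range_cons, Matrix.range_empty, Set.union_empty,
        Set.union_singleton]
      exact Set.pair_comm Iphi Rphi
    rw [hP, ← hr, finrank_span_eq_card hind]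
    simp
  -- the span of L has dimension at most 2
  have hWle : Module.finrank ℝ W ≤ 2 := by
    obtain ⟨t, hts, hsp, hli⟩ := exists_linearIndependent ℝ (L : Set (ℝ × (Fin n → ℝ) × ℝ))
    have htfin : t.Finite := hli.setFinite
    haveI : Fintype t := htfin.fintype
    have hliZ : LinearIndependent ℤ ((↑) : t → ℝ × (Fin n → ℝ) × ℝ) := by
      refine hli.restrict_scalars ?_
      intro a b hab
      simpa using hab
    have hliL : LinearIndependent ℤ (fun x : t => (⟨x.1, hts x.2⟩ : L)) :=
      LinearIndependent.of_comp L.subtype hliZ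
    have h1 : (Cardinal.mk t) ≤ Module.rank ℤ L := hliL.cardinal_le_rank
    have h2 : Module.rank ℤ L < Cardinal.aleph0 := by
      by_contra hcon
      push_neg at hcon
      have h0 := Cardinal.toNat_apply_of_aleph0_le hcon
      rw [Module.finrank] at hrk
      omega
    have h3 := Cardinal.toNat_le_toNat h1 h2
    rw [Module.finrank] at hrk
    rw [Cardinal.mk_toNat_eq_card] at h3
    have h4 : Module.finrank ℝ (Submodule.span ℝ t) = t.toFinset.card :=
      finrank_span_set_eq_card hli
    rw [hW, ← hsp, h4, Set.toFinset_card]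
    omega
  have hPWeq : P = W := Submodule.eq_of_le_of_finrank_le hPW (by omega)
  -- decomposition of elements of L
  have hmem : ∀ v ∈ L, ∃ α β : ℝ, α • Rphi + β • Iphi = v := by
    intro v hv
    have h1 : v ∈ W := Submodule.subset_span hv
    rw [← hPWeq, hP] at h1
    rwa [Submodule.mem_span_pair] at h1
  -- an element of L with nonzero first coordinate
  have hex1 : ∃ v ∈ L, v.1 ≠ 0 := by
    by_contra hcon
    push_neg at hcon
    have hker : W ≤ LinearMap.ker (LinearMap.fst ℝ ℝ ((Fin n → ℝ) × ℝ)) := by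
      rw [hW, Submodule.span_le]
      intro v hv
      simp only [SetLike.mem_coe, LinearMap.mem_ker, LinearMap.fst_apply]
      exact hcon v hv
    have h1 := hker hRe
    rw [LinearMap.mem_ker] at h1
    have h2 : (1 : ℝ) = 0 := by simpa [hRphi, LinearMap.fst_apply] using h1
    norm_num at h2
  obtain ⟨v₁, hv₁L, hv₁ne⟩ := hex1
  -- an element of L proportional to Iphi, nonzero
  have hexw : ∃ w ∈ L, w ≠ 0 ∧ w.1 = 0 := by
    by_contra hcon
    push_neg at hcon
    set π : (ℝ × (Fin n → ℝ) × ℝ) →ₗ[ℝ] (ℝ × (Fin n → ℝ) × ℝ) :=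
      v₁.1 • LinearMap.id - (LinearMap.fst ℝ ℝ ((Fin n → ℝ) × ℝ)).smulRight v₁ with hπ
    have hπv : ∀ v : ℝ × (Fin n → ℝ) × ℝ, π v = v₁.1 • v - v.1 • v₁ := fun v => rfl
    have hker : W ≤ LinearMap.ker π := by
      rw [hW, Submodule.span_le]
      intro v hv
      obtain ⟨mv, cv, xv, hm⟩ := hLM hv
      obtain ⟨a, c', x', ha⟩ := hLM hv₁L
      have hmemL : π v ∈ L := by
        rw [hπv]
        have h1 : v₁.1 • v = (a : ℤ) • v := by
          rw [ha, ← Int.cast_smul_eq_zsmul ℝ]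
        have h2 : v.1 • v₁ = (mv : ℤ) • v₁ := by
          rw [hm, ← Int.cast_smul_eq_zsmul ℝ]
        rw [h1, h2]
        exact sub_mem (L.smul_mem a hv) (L.smul_mem mv hv₁L)
      have hfst : (π v).1 = 0 := by
        rw [hπv]
        show v₁.1 * v.1 - v.1 * v₁.1 = 0
        ring
      have h0 : π v = 0 := by
        by_contra hne
        exact hcon (π v) hmemL hne hfst
      simp only [SetLike.mem_coe, LinearMap.mem_ker]
      exact h0
    have h1 := hker hIm
    rw [LinearMap.mem_ker, hπv Iphi] at h1
    have h2 : Iphi.1 = 0 := rfl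
    rw [h2, zero_smul, sub_zero] at h1
    rcases smul_eq_zero.mp h1 with h' | h'
    · exact hv₁ne h'
    · exact hIne h'
  obtain ⟨w, hwL, hwne, hwfst⟩ := hexw
  -- integral coordinates
  obtain ⟨a₁, c₁, x₁, hv₁⟩ := hLM hv₁L
  obtain ⟨a₀, c₂, H, hw⟩ := hLM hwL
  have ha₁ : (a₁ : ℝ) ≠ 0 := by rw [hv₁] at hv₁ne; exact hv₁ne
  -- decompose w
  obtain ⟨δ, β, hwdec⟩ := hmem w hwL
  obtain ⟨we1, we2, we3⟩ := hcomp δ β w hwdec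
  rw [hwfst] at we1
  subst we1
  rw [zero_smul, zero_add] at we2
  rw [zero_mul, zero_add] at we3
  have hβ : β ≠ 0 := by
    intro h
    subst h
    rw [zero_smul, zero_add, zero_smul] at hwdec
    exact hwne hwdec.symm
  have hβω : β • ω = intCast H := by rw [we2, hw]
  have hc₂ : β * bR G B ω = (c₂ : ℝ) := by rw [we3, hw]
  -- decompose v₁
  obtain ⟨α, γ, hvdec⟩ := hmem v₁ hv₁L
  obtain ⟨ve1, ve2, ve3⟩ := hcomp α γ v₁ hvdec
  have hα : α = (a₁ : ℝ) := by rw [ve1, hv₁]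
  subst hα
  have hsnd : (a₁ : ℝ) • B + γ • ω = intCast x₁ := by rw [ve2, hv₁]
  have htrd : (a₁ : ℝ) * ((bR G B B - bR G ω ω) / 2) + γ * bR G B ω = (c₁ : ℝ) := by
    rw [ve3, hv₁]
  -- arithmetic
  set m : ℤ := dotProduct H (G.mulVec H) with hmdef
  have hm : (m : ℝ) = β * (β * bR G ω ω) := by
    rw [hmdef, ← bR_int, ← hβω, bR_smul_left, bR_smul_right]
  have hmpos : (0 : ℝ) < (m : ℝ) := by
    rw [hm, ← mul_assoc, ← sq]
    exact mul_pos (lt_of_le_of_ne (sq_nonneg β) (Ne.symm (pow_ne_zero 2 hβ))) hω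
  have hmne : (m : ℝ) ≠ 0 := ne_of_gt hmpos
  have hmQne : (m : ℚ) ≠ 0 := by
    intro h
    apply hmne
    have h' : m = 0 := by exact_mod_cast h
    rw [h']
    simp
  set k : ℤ := dotProduct x₁ (G.mulVec H) with hkdef
  have hk : (k : ℝ) = (a₁ : ℝ) * (β * bR G B ω) + γ * (β * bR G ω ω) := by
    rw [hkdef, ← bR_int, ← hβω, ← hsnd, bR_add_left, bR_smul_left, bR_smul_left,
      bR_smul_right, bR_smul_right]
  set j : ℤ := k - a₁ * c₂ with hjdef
  have hj : γ * β * bR G ω ω = (j : ℝ) := by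
    rw [hjdef]
    push_cast
    rw [hk]
    linear_combination (-(a₁ : ℝ)) * hc₂
  set r : ℚ := (j : ℚ) / (m : ℚ) with hrdef
  have hrR : (r : ℝ) = (j : ℝ) / (m : ℝ) := by
    rw [hrdef]
    push_cast
    ring
  have hγ : γ = (r : ℝ) * β := by
    have hγm : γ * (m : ℝ) = (j : ℝ) * β := by
      linear_combination γ * hm + β * hj
    rw [hrR]
    field_simp
    linarith [hγm]
  -- B is rational
  set q : Fin n → ℚ := fun i => ((x₁ i : ℚ) - r * (H i : ℚ)) / (a₁ : ℚ) with hqdef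
  have hB : B = fun i => (q i : ℝ) := by
    funext i
    have hsi : (a₁ : ℝ) * B i + γ * ω i = (x₁ i : ℝ) := by
      have := congrFun hsnd i
      simpa [intCast, smul_eq_mul] using this
    have hβωi : β * ω i = (H i : ℝ) := by
      have := congrFun hβω i
      simpa [intCast, smul_eq_mul] using this
    rw [hqdef]
    push_cast
    field_simp
    linear_combination hsi - ω i * hγ - (r : ℝ) * hβωi
  refine ⟨⟨q, hB⟩, ⟨β⁻¹, H, ?_⟩, ?_⟩
  · rw [← hβω, smul_smul, inv_mul_cancel₀ hβ, one_smul]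
  -- b(ω,ω) is rational
  · set qBB : ℚ := dotProduct q ((G.map (Int.cast : ℤ → ℚ)).mulVec q) with hqBBdef
    have hBB : bR G B B = (qBB : ℝ) := by
      rw [hB, hqBBdef, bR_rat]
    have h5 : γ * bR G B ω = (r : ℝ) * (c₂ : ℝ) := by
      rw [hγ]
      linear_combination (r : ℝ) * hc₂
    have key : (a₁ : ℝ) * (bR G B B - bR G ω ω) = 2 * ((c₁ : ℝ) - (r : ℝ) * (c₂ : ℝ)) := by
      linear_combination 2 * htrd - 2 * h5
    refine ⟨qBB - 2 * ((c₁ : ℚ) - r * (c₂ : ℚ)) / (a₁ : ℚ), ?_⟩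
    have ha₁Q : (a₁ : ℚ) ≠ 0 := by
      intro h
      apply ha₁
      exact_mod_cast h
    push_cast
    rw [← hBB]
    field_simp
    linear_combination -(key)
end
end

section
/- Let H ∈ Λ with b(H,H) = 2n for some integer n > 0, and let ε ∈ ℝ with ε² irrational. Then every ℤ-submodule L ⊆ M whose ℝ-span contains both (1, 0, −ε²·n) and (0, H, 0) has rank at least 3. (These two vectors are the real and, up to the scalar ε, imaginary parts of e^{iεH} = (1, iεH, −ε²n); hence the class εH admits no rank-2 sublattice L of the Mukai lattice with e^{iεH} ∈ L_ℂ, in contrast to the class H itself.) -/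
noncomputable section

/-- The cast map `ℤ × ℤⁿ × ℤ → ℝ × ℝⁿ × ℝ` as a ℤ-linear map. -/
def castMap (m : ℕ) : (ℤ × (Fin m → ℤ) × ℤ) →ₗ[ℤ] (ℝ × (Fin m → ℝ) × ℝ) where
  toFun p := ((p.1 : ℝ), intCast p.2.1, (p.2.2 : ℝ))
  map_add' p q := by
    refine Prod.ext ?_ (Prod.ext (funext fun i => ?_) ?_) <;>
      simp [intCast, Prod.fst_add, Prod.snd_add]
  map_smul' z p := by
    refine Prod.ext ?_ (Prod.ext (funext fun i => ?_) ?_) <;>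
      simp [intCast, zsmul_eq_mul]

/-!
Let `H ∈ Λ` with `b(H,H) = 2n` for an integer `n > 0`, and let `ε ∈ ℝ` with `ε²`
irrational.  Then every ℤ-submodule `L ⊆ M` whose ℝ-span contains both
`(1, 0, −ε²·n)` and `(0, H, 0)` has rank at least `3`.
-/

open Matrix in
theorem no_rank_two_lattice_for_irrational_kahler_class
    {m : ℕ} (G : Matrix (Fin m) (Fin m) ℤ) (hG : G.IsSymm)
    (H : Fin m → ℤ) (n : ℤ) (hn : 0 < n) (hH : H ⬝ᵥ G.mulVec H = 2 * n)
    (ε : ℝ) (hε : Irrational (ε ^ 2))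
    (L : Submodule ℤ (ℝ × (Fin m → ℝ) × ℝ))
    (hLM : (L : Set (ℝ × (Fin m → ℝ) × ℝ)) ⊆ Mset m)
    (h1 : ((1 : ℝ), (0 : Fin m → ℝ), -(ε ^ 2 * (n : ℝ)))
      ∈ Submodule.span ℝ (L : Set (ℝ × (Fin m → ℝ) × ℝ)))
    (h2 : ((0 : ℝ), intCast H, (0 : ℝ))
      ∈ Submodule.span ℝ (L : Set (ℝ × (Fin m → ℝ) × ℝ))) :
    3 ≤ Module.finrank ℤ L := by
  classical
  let f := castMap m
  -- `L` is contained in the range of the cast map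
  have hLle : L ≤ LinearMap.range f := by
    intro w hw
    obtain ⟨a, c, x, hx⟩ := hLM hw
    exact ⟨(a, x, c), hx.symm⟩
  have hinj : Function.Injective f := by
    intro p q h
    simp only [f, castMap, LinearMap.coe_mk, AddHom.coe_mk, Prod.mk.injEq] at h
    obtain ⟨ha', hb', hc'⟩ := h
    refine Prod.ext (by exact_mod_cast ha') (Prod.ext (funext fun i => ?_) (by exact_mod_cast hc'))
    simpa [intCast, Int.cast_inj] using congrFun hb' i
  -- transfer finiteness and freeness from `ℤ × ℤᵐ × ℤ`
  let e : (L.comap f) ≃ₗ[ℤ] L :=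
    (Submodule.equivMapOfInjective f hinj (L.comap f)).trans
      (LinearEquiv.ofEq _ _ (Submodule.map_comap_eq_self hLle))
  haveI : Module.Finite ℤ (L.comap f) :=
    Module.Finite.iff_fg.mpr (IsNoetherian.noetherian _)
  haveI : Module.Free ℤ (L.comap f) := Module.free_of_finite_type_torsion_free'
  haveI : Module.Finite ℤ L := Module.Finite.equiv e
  haveI : Module.Free ℤ L := Module.Free.of_equiv e
  by_contra hlt
  push_neg at hlt
  have hr : Module.finrank ℤ L ≤ 2 := by omega
  -- a basis of `L` of size `≤ 2`
  let b := Module.finBasis ℤ L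
  let g : Fin (Module.finrank ℤ L) → (ℝ × (Fin m → ℝ) × ℝ) := (L.subtype : L →ₗ[ℤ] (ℝ × (Fin m → ℝ) × ℝ)) ∘ b
  have hspanL : Submodule.span ℤ (Set.range g) = L := by
    have h := b.span_eq
    have h' : Submodule.map L.subtype (Submodule.span ℤ (Set.range ⇑b)) =
        Submodule.map L.subtype ⊤ := by rw [h]
    rwa [Submodule.map_span, Submodule.map_top, Submodule.range_subtype,
      ← Set.range_comp] at h'
  have hspanR : Submodule.span ℝ (L : Set (ℝ × (Fin m → ℝ) × ℝ)) = Submodule.span ℝ (Set.range g) := by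
    conv_lhs => rw [← hspanL]
    exact Submodule.span_span_of_tower (R := ℤ) (S := ℝ) (s := Set.range g)
  have hdim : Module.finrank ℝ (Submodule.span ℝ (L : Set (ℝ × (Fin m → ℝ) × ℝ))) ≤ 2 := by
    rw [hspanR]
    have := finrank_range_le_card (R := ℝ) g
    simp only [Set.finrank, Fintype.card_fin] at this
    exact this.trans hr
  -- the two given vectors are linearly independent
  set v₁ : (ℝ × (Fin m → ℝ) × ℝ) := ((1 : ℝ), (0 : Fin m → ℝ), -(ε ^ 2 * (n : ℝ))) with hv₁
  set v₂ : (ℝ × (Fin m → ℝ) × ℝ) := ((0 : ℝ), intCast H, (0 : ℝ)) with hv₂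
  have hH0 : H ≠ 0 := by
    intro h
    rw [h] at hH
    simp [dotProduct] at hH
    omega
  have hv₂0 : v₂ ≠ 0 := by
    obtain ⟨i, hi⟩ := Function.ne_iff.mp hH0
    intro hzero
    apply hi
    have h' : intCast H = 0 := congrArg (fun z : (ℝ × (Fin m → ℝ) × ℝ) => z.2.1) hzero
    simpa [intCast, Int.cast_inj] using congrFun h' i
  have hind : LinearIndependent ℝ ![v₁, v₂] := by
    rw [LinearIndependent.pair_iff]
    intro s t hst
    have hs : s = 0 := by
      have := congrArg Prod.fst hst
      simpa [hv₁, hv₂, Prod.fst_add, Prod.smul_fst] using this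
    subst hs
    simp only [zero_smul, zero_add] at hst
    exact ⟨rfl, by
      rcases smul_eq_zero.mp hst with h | h
      · exact h
      · exact absurd h hv₂0⟩
  haveI : FiniteDimensional ℝ (Submodule.span ℝ (L : Set (ℝ × (Fin m → ℝ) × ℝ))) := by
    rw [hspanR]
    exact FiniteDimensional.span_of_finite ℝ (Set.finite_range g)
  have hple : Submodule.span ℝ ({v₁, v₂} : Set (ℝ × (Fin m → ℝ) × ℝ)) ≤ Submodule.span ℝ (L : Set (ℝ × (Fin m → ℝ) × ℝ)) := by
    rw [Submodule.span_le]
    rintro x (rfl | rfl)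
    · exact h1
    · exact h2
  have hp2 : Module.finrank ℝ (Submodule.span ℝ ({v₁, v₂} : Set (ℝ × (Fin m → ℝ) × ℝ))) = 2 := by
    have hrange : Set.range ![v₁, v₂] = {v₁, v₂} := by
      ext z
      simp [Matrix.range_cons, Matrix.range_empty, or_comm]
    rw [← hrange, finrank_span_eq_card hind]
    simp
  have heq : Submodule.span ℝ ({v₁, v₂} : Set (ℝ × (Fin m → ℝ) × ℝ)) = Submodule.span ℝ (L : Set (ℝ × (Fin m → ℝ) × ℝ)) :=
    Submodule.eq_of_le_of_finrank_le hple (by rw [hp2]; exact hdim)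
  -- every element of `L` has vanishing first coordinate
  have hfst : ∀ w ∈ L, w.1 = 0 := by
    intro w hw
    obtain ⟨a, c, x, hwx⟩ := hLM hw
    have hwmem : w ∈ Submodule.span ℝ ({v₁, v₂} : Set (ℝ × (Fin m → ℝ) × ℝ)) := by
      rw [heq]; exact Submodule.subset_span hw
    obtain ⟨s, t, hst⟩ := Submodule.mem_span_pair.mp hwmem
    have h₂ : w.1 = (a : ℝ) := by rw [hwx]
    have hs : s = w.1 := by
      have := congrArg Prod.fst hst
      simpa [hv₁, hv₂, Prod.fst_add, Prod.smul_fst] using this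
    have hc : (c : ℝ) = -(s * (ε ^ 2 * (n : ℝ))) := by
      have := congrArg (fun z : (ℝ × (Fin m → ℝ) × ℝ) => z.2.2) hst
      simpa [hv₁, hv₂, hwx, Prod.snd_add, Prod.smul_snd, mul_comm] using this.symm
    have ha : a = 0 := by
      by_contra ha0
      apply hε
      refine ⟨(-c : ℚ) / ((a : ℚ) * (n : ℚ)), ?_⟩
      have han : ((a : ℝ) * (n : ℝ)) ≠ 0 :=
        mul_ne_zero (Int.cast_ne_zero.mpr ha0) (Int.cast_ne_zero.mpr (by omega))
      have hcr : (c : ℝ) = -((a : ℝ) * (ε ^ 2 * (n : ℝ))) := by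
        rw [hs, h₂] at hc
        exact hc
      push_cast
      rw [div_eq_iff han, hcr]
      ring
    have : w.1 = (a : ℝ) := by rw [hwx]
    rw [this, ha]
    norm_num
  -- but then the first vector cannot lie in the ℝ-span of `L`
  have hker : Submodule.span ℝ (L : Set (ℝ × (Fin m → ℝ) × ℝ)) ≤
      LinearMap.ker (LinearMap.fst ℝ ℝ ((Fin m → ℝ) × ℝ)) := by
    rw [Submodule.span_le]
    intro w hw
    simpa [LinearMap.mem_ker] using hfst w hw
  have := hker h1
  simp [hv₁, LinearMap.mem_ker] at this
end
end
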